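/- arXiv:2408.09250 — 2 statements merged into one kernel-verified Lean document; each statement's English description precedes it below -/
import Mathlib

section
/- Let P_f be column-stochastic and C_r^+ the state division projection. If from every state in the range of C_r^+ there is positive probability of eventually leaving that set (i.e., the spectral radius of P_f C_r^+ is strictly less than 1), then the transition operator P_{r/q} := C_r^- (I − P_f C_r^+)^{-1} is well-defined and maps probability vectors to probability vectors. -/
/-!
Write `A = P_f C_r^+`. Its columns sum to at most one, so all powers `Aᵏ` have entries in
`[0, 1]`. For `0 ≤ t < 1` the Neumann series `∑ tᵏ Aᵏ` therefore converges entrywise to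
`(1 - t A)⁻¹`, which is entrywise nonnegative. The hypothesis `ρ(A) < 1` only gives that
`1 - A` is invertible (the real spectral radius does not see complex eigenvalues), but by
continuity of matrix inversion `(1 - t A)⁻¹ → (1 - A)⁻¹` as `t → 1⁻`, so `(1 - A)⁻¹ ≥ 0`.
Finally `1ᵀ C_r^- = 1ᵀ (1 - C_r^+) = 1ᵀ (1 - A)` by column-stochasticity of `P_f`, hence
`1ᵀ C_r^- (1 - A)⁻¹ = 1ᵀ`: the matrix `C_r^- (1 - A)⁻¹` is column-stochastic.
-/

open Filter Topology

namespace Matrix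

variable {n : Type*} [Fintype n]

lemma vecMul_mono_of_nonneg {A : Matrix n n ℝ} (hA : ∀ i j, 0 ≤ A i j) {v w : n → ℝ}
    (hvw : v ≤ w) : v ᵥ* A ≤ w ᵥ* A := fun j =>
  Finset.sum_le_sum fun l _ => mul_le_mul_of_nonneg_right (hvw l) (hA l j)

variable [DecidableEq n]

lemma one_vecMul_pow_le_one {A : Matrix n n ℝ} (hA : ∀ i j, 0 ≤ A i j) (hcol : 1 ᵥ* A ≤ 1)
    (k : ℕ) : 1 ᵥ* A ^ k ≤ 1 := by
  induction k with
  | zero => simp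
  | succ k ih =>
    rw [pow_succ, ← vecMul_vecMul]
    exact (vecMul_mono_of_nonneg hA ih).trans hcol

lemma pow_apply_le_one {A : Matrix n n ℝ} (hA : ∀ i j, 0 ≤ A i j) (hcol : 1 ᵥ* A ≤ 1)
    (k : ℕ) (i j : n) : (A ^ k) i j ≤ 1 :=
  calc (A ^ k) i j ≤ ∑ l, (A ^ k) l j :=
        Finset.single_le_sum (fun l _ => pow_apply_nonneg hA k l j) (Finset.mem_univ i)
    _ = (1 ᵥ* A ^ k) j := by simp [vecMul, dotProduct]
    _ ≤ 1 := one_vecMul_pow_le_one hA hcol k j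

lemma summable_smul_pow {A : Matrix n n ℝ} (hA : ∀ i j, 0 ≤ A i j) (hcol : 1 ᵥ* A ≤ 1)
    {t : ℝ} (ht₀ : 0 ≤ t) (ht₁ : t < 1) : Summable fun k : ℕ => (t • A) ^ k := by
  refine Pi.summable.2 fun i => Pi.summable.2 fun j => ?_
  refine (summable_geometric_of_lt_one ht₀ ht₁).of_nonneg_of_le (fun k => ?_) (fun k => ?_)
  all_goals simp only [smul_pow, smul_apply, smul_eq_mul]
  · exact mul_nonneg (pow_nonneg ht₀ k) (pow_apply_nonneg hA k i j)
  · exact mul_le_of_le_one_right (pow_nonneg ht₀ k) (pow_apply_le_one hA hcol k i j)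

lemma inv_one_sub_smul_apply_nonneg {A : Matrix n n ℝ} (hA : ∀ i j, 0 ≤ A i j)
    (hcol : 1 ᵥ* A ≤ 1) {t : ℝ} (ht₀ : 0 ≤ t) (ht₁ : t < 1) (i j : n) :
    0 ≤ (1 - t • A)⁻¹ i j := by
  have hsum := summable_smul_pow hA hcol ht₀ ht₁
  rw [inv_eq_right_inv hsum.one_sub_mul_tsum_pow]
  refine (Pi.hasSum.1 (Pi.hasSum.1 hsum.hasSum i) j).nonneg fun k => ?_
  simp only [smul_pow, smul_apply, smul_eq_mul]
  exact mul_nonneg (pow_nonneg ht₀ k) (pow_apply_nonneg hA k i j)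

lemma tendsto_inv_one_sub_smul {A : Matrix n n ℝ} (hunit : IsUnit (1 - A)) :
    Tendsto (fun t : ℝ => (1 - t • A)⁻¹) (𝓝 1) (𝓝 (1 - A)⁻¹) := by
  have hdet : (1 - A).det ≠ 0 := ((isUnit_iff_isUnit_det _).1 hunit).ne_zero
  have hinv : ContinuousAt Inv.inv (1 - A) := continuousAt_matrix_inv _ <| by
    rw [Ring.inverse_eq_inv']; exact continuousAt_inv₀ hdet
  have hlin : Tendsto (fun t : ℝ => 1 - t • A) (𝓝 1) (𝓝 (1 - A)) :=
    (continuous_const.sub (continuous_id.smul continuous_const)).tendsto' _ _ (by simp)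
  exact hinv.tendsto.comp hlin

lemma inv_one_sub_apply_nonneg {A : Matrix n n ℝ} (hA : ∀ i j, 0 ≤ A i j)
    (hcol : 1 ᵥ* A ≤ 1) (hunit : IsUnit (1 - A)) (i j : n) : 0 ≤ (1 - A)⁻¹ i j := by
  have hlim := ((continuous_apply_apply i j).tendsto _).comp
    ((tendsto_inv_one_sub_smul hunit).mono_left (nhdsWithin_le_nhds (s := Set.Iio 1)))
  refine ge_of_tendsto hlim ?_
  filter_upwards [Ioo_mem_nhdsLT zero_lt_one] with t ht
  exact inv_one_sub_smul_apply_nonneg hA hcol ht.1.le ht.2 i j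

omit [DecidableEq n] in
lemma mul_apply_nonneg {A B : Matrix n n ℝ} (hA : ∀ i j, 0 ≤ A i j) (hB : ∀ i j, 0 ≤ B i j)
    (i j : n) : 0 ≤ (A * B) i j :=
  Finset.sum_nonneg fun l _ => mul_nonneg (hA i l) (hB l j)

lemma mul_inv_one_sub_mul_mem_colStochastic {P Cp Cm : Matrix n n ℝ}
    (hP : P ∈ colStochastic ℝ n) (hCp : ∀ i j, 0 ≤ Cp i j) (hCm : ∀ i j, 0 ≤ Cm i j)
    (hC : Cp + Cm = 1) (hunit : IsUnit (1 - P * Cp)) :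
    Cm * (1 - P * Cp)⁻¹ ∈ colStochastic ℝ n := by
  have hPCp : 1 ᵥ* (P * Cp) = 1 ᵥ* Cp := by
    rw [← vecMul_vecMul, one_vecMul_of_mem_colStochastic hP]
  have hCm_eq : 1 ᵥ* Cm = 1 ᵥ* (1 - P * Cp) := by
    rw [eq_sub_of_add_eq' hC, vecMul_sub, vecMul_sub, hPCp]
  have hcol : 1 ᵥ* (P * Cp) ≤ 1 := by
    rw [hPCp, eq_sub_of_add_eq hC, vecMul_sub, vecMul_one]
    exact sub_le_self _ fun j => Finset.sum_nonneg fun i _ => mul_nonneg zero_le_one (hCm i j)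
  have hdet : IsUnit (1 - P * Cp).det := (isUnit_iff_isUnit_det _).1 hunit
  refine ⟨mul_apply_nonneg hCm <| inv_one_sub_apply_nonneg
    (mul_apply_nonneg (fun _ _ => nonneg_of_mem_colStochastic hP) hCp) hcol hunit, ?_⟩
  rw [← vecMul_vecMul, hCm_eq, vecMul_vecMul, mul_nonsing_inv _ hdet, vecMul_one]

end Matrix

theorem stmt_5_general (N r : ℕ)
    (Pf Cp Cm : Matrix (Fin (N + 1)) (Fin (N + 1)) ℝ)
    (hCp : Cp = Matrix.of fun (i j : Fin (N + 1)) =>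
      if i = j ∧ (i : ℕ) < N - r then (1 : ℝ) else 0)
    (hCm : Cm = Matrix.of fun (i j : Fin (N + 1)) =>
      if i = j ∧ N - r ≤ (i : ℕ) then (1 : ℝ) else 0)
    (hPfnn : ∀ i j, 0 ≤ Pf i j) (hPfcol : ∀ j, ∑ i, Pf i j = 1)
    (hspec : spectralRadius ℝ (Pf * Cp) < 1) :
    IsUnit (1 - Pf * Cp) ∧
    ∀ π : Fin (N + 1) → ℝ, (∀ i, 0 ≤ π i) → ∑ i, π i = 1 →
      (∀ i, 0 ≤ (Cm * (1 - Pf * Cp)⁻¹).mulVec π i) ∧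
      ∑ i, (Cm * (1 - Pf * Cp)⁻¹).mulVec π i = 1 := by
  have hunit : IsUnit (1 - Pf * Cp) := by
    have h := spectrum.mem_resolventSet_of_spectralRadius_lt (k := (1 : ℝ)) (by simpa using hspec)
    rwa [spectrum.mem_resolventSet_iff, map_one] at h
  have hC : Cp + Cm = 1 := by
    ext i j
    simp only [hCp, hCm, Matrix.add_apply, Matrix.of_apply, Matrix.one_apply]
    split_ifs <;> grind
  have hM := Matrix.mul_inv_one_sub_mul_mem_colStochastic
    (Matrix.mem_colStochastic_iff_sum.2 ⟨hPfnn, hPfcol⟩)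
    (fun i j => by rw [hCp, Matrix.of_apply]; split_ifs <;> norm_num)
    (fun i j => by rw [hCm, Matrix.of_apply]; split_ifs <;> norm_num) hC hunit
  refine ⟨hunit, fun π hπ hπsum => ⟨Matrix.nonneg_mulVec_of_mem_colStochastic hM hπ, ?_⟩⟩
  rw [Matrix.sum_mulVec_of_mem_colStochastic hM, hπsum]

/-- If `P_f` is column-stochastic and `ρ(P_f C_r^+) < 1`, then
`P_{r/q} = C_r^- (I - P_f C_r^+)⁻¹` is well-defined and maps probability vectors to
probability vectors. -/
theorem stmt_5 (N r : ℕ) (hr : r ≤ N)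
    (Pf Cp Cm : Matrix (Fin (N + 1)) (Fin (N + 1)) ℝ)
    (hCp : Cp = Matrix.of fun (i j : Fin (N + 1)) =>
      if i = j ∧ (i : ℕ) < N - r then (1 : ℝ) else 0)
    (hCm : Cm = Matrix.of fun (i j : Fin (N + 1)) =>
      if i = j ∧ N - r ≤ (i : ℕ) then (1 : ℝ) else 0)
    (hPfnn : ∀ i j, 0 ≤ Pf i j) (hPfcol : ∀ j, ∑ i, Pf i j = 1)
    (hspec : spectralRadius ℝ (Pf * Cp) < 1) :
    IsUnit (1 - Pf * Cp) ∧
    ∀ π : Fin (N + 1) → ℝ, (∀ i, 0 ≤ π i) → ∑ i, π i = 1 →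
      (∀ i, 0 ≤ (Cm * (1 - Pf * Cp)⁻¹).mulVec π i) ∧
      ∑ i, (Cm * (1 - Pf * Cp)⁻¹).mulVec π i = 1 :=
  stmt_5_general N r Pf Cp Cm hCp hCm hPfnn hPfcol hspec
end

section
/- Decomposition into mutually exclusive reorder events: with P_f column-stochastic, C_r^± the state division matrices, and ρ(P_f C_r^+) < 1, for any probability vector π^q the vectors π^{r,k} = C_r^- (P_f C_r^+)^k π^q satisfy Σ_{k=0}^∞ ‖π^{r,k}‖_1 = 1, i.e., a reorder occurs with probability 1. -/
attribute [local instance] Matrix.linftyOpNormedRing Matrix.linftyOpNormedAlgebra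

/-- Mutually exclusive reorder events: the vectors `π^{r,k} = C_r^- (P_f C_r^+)^k π^q`
have `L¹` masses summing to 1, i.e. a reorder occurs with probability 1. -/
theorem stmt_6 (N r : ℕ) (hr : r ≤ N)
    (Pf Cp Cm : Matrix (Fin (N + 1)) (Fin (N + 1)) ℝ)
    (hCp : Cp = Matrix.of fun (i j : Fin (N + 1)) =>
      if i = j ∧ (i : ℕ) < N - r then (1 : ℝ) else 0)
    (hCm : Cm = Matrix.of fun (i j : Fin (N + 1)) =>
      if i = j ∧ N - r ≤ (i : ℕ) then (1 : ℝ) else 0)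
    (hPfnn : ∀ i j, 0 ≤ Pf i j) (hPfcol : ∀ j, ∑ i, Pf i j = 1)
    (hspec : spectralRadius ℝ (Pf * Cp) < 1)
    (πq : Fin (N + 1) → ℝ) (hπnn : ∀ i, 0 ≤ πq i) (hπsum : ∑ i, πq i = 1) :
    ∑' k : ℕ, ∑ i, (Cm * (Pf * Cp) ^ k).mulVec πq i = 1 := by
  set A := Pf * Cp with hA
  -- Cp acts by truncation on vectors
  have hCpv : ∀ (w : Fin (N + 1) → ℝ) i,
      Cp.mulVec w i = if (i : ℕ) < N - r then w i else 0 := by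
    intro w i
    simp only [hCp, Matrix.mulVec, dotProduct, Matrix.of_apply]
    by_cases h : (i : ℕ) < N - r
    · simp [h, Finset.sum_ite_eq, ite_and]
    · simp [h, ite_and]
  -- Cm = 1 - Cp
  have hCmCp : Cm = 1 - Cp := by
    subst hCp hCm
    ext i j
    by_cases hij : i = j
    · subst hij
      by_cases h : (i : ℕ) < N - r
      · have h2 : ¬ (N - r ≤ (i : ℕ)) := not_le.mpr h
        simp [Matrix.one_apply, Matrix.sub_apply, h, h2]
        omega
      · have h2 : N - r ≤ (i : ℕ) := le_of_not_gt h
        simp [Matrix.one_apply, Matrix.sub_apply, h, h2]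
        omega
    · simp [Matrix.one_apply, Matrix.sub_apply, hij]
  -- sum of entries is preserved by Pf
  have hPfsum : ∀ (w : Fin (N + 1) → ℝ), ∑ i, Pf.mulVec w i = ∑ j, w j := by
    intro w
    simp only [Matrix.mulVec, dotProduct]
    rw [Finset.sum_comm]
    simp [← Finset.sum_mul, hPfcol]
  -- A has nonnegative entries
  have hAnn : ∀ i j, 0 ≤ A i j := by
    intro i j
    rw [hA, Matrix.mul_apply]
    apply Finset.sum_nonneg
    intro k _
    apply mul_nonneg (hPfnn i k)
    rw [hCp]
    simp only [Matrix.of_apply]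
    split <;> norm_num
  -- vectors A^k πq are entrywise nonneg
  have hvnn : ∀ k i, 0 ≤ (A ^ k).mulVec πq i := by
    intro k
    induction k with
    | zero => simpa using hπnn
    | succ n ih =>
      intro i
      rw [pow_succ', ← Matrix.mulVec_mulVec]
      simp only [Matrix.mulVec, dotProduct]
      apply Finset.sum_nonneg
      intro j _
      exact mul_nonneg (hAnn i j) (ih j)
  set a : ℕ → ℝ := fun k => ∑ i, (A ^ k).mulVec πq i with ha
  have ha0 : a 0 = 1 := by simp [ha, Matrix.one_mulVec, hπsum]
  have hann : ∀ k, 0 ≤ a k := fun k => Finset.sum_nonneg fun i _ => hvnn k i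
  -- a (k+1) = sum of entries of Cp (A^k πq)
  have hastep : ∀ k, a (k + 1) = ∑ i, Cp.mulVec ((A ^ k).mulVec πq) i := by
    intro k
    have : (A ^ (k + 1)).mulVec πq = Pf.mulVec (Cp.mulVec ((A ^ k).mulVec πq)) := by
      rw [Matrix.mulVec_mulVec, Matrix.mulVec_mulVec, ← hA, ← pow_succ']
    rw [ha]
    simp only [this]
    exact hPfsum _
  -- a is antitone
  have hamono : ∀ k, a (k + 1) ≤ a k := by
    intro k
    rw [hastep k]
    apply Finset.sum_le_sum
    intro i _
    rw [hCpv]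
    split
    · exact le_rfl
    · exact hvnn k i
  -- a k ≤ 1
  have haub : ∀ k, a k ≤ 1 := by
    intro k
    induction k with
    | zero => exact le_of_eq ha0
    | succ n ih => exact (hamono n).trans ih
  -- 1 - A is invertible
  have hunit : IsUnit ((1 : Matrix (Fin (N + 1)) (Fin (N + 1)) ℝ) - A) := by
    have h1 : (1 : ℝ) ∈ resolventSet ℝ A :=
      spectrum.mem_resolventSet_of_spectralRadius_lt (by simpa using hspec)
    rw [spectrum.mem_resolventSet_iff] at h1
    simpa using h1
  obtain ⟨u, hu⟩ := hunit
  set B := ((↑u⁻¹ : Matrix (Fin (N + 1)) (Fin (N + 1)) ℝ)) with hB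
  -- geometric sum formula
  have hgeom : ∀ n, (∑ k ∈ Finset.range n, A ^ k) = B * (1 - A ^ n) := by
    intro n
    have h2 : ((1 : Matrix (Fin (N + 1)) (Fin (N + 1)) ℝ) - A) *
        ∑ k ∈ Finset.range n, A ^ k = 1 - A ^ n := mul_neg_geom_sum A n
    calc (∑ k ∈ Finset.range n, A ^ k)
        = B * ((↑u : Matrix (Fin (N + 1)) (Fin (N + 1)) ℝ) *
            ∑ k ∈ Finset.range n, A ^ k) := (u.inv_mul_cancel_left _).symm
      _ = B * (1 - A ^ n) := by rw [hu, h2]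
  set M : ℝ := ∑ i, ∑ j, |B i j| with hM
  -- partial sums of a are bounded by M
  have hpsum : ∀ n, ∑ k ∈ Finset.range n, a k ≤ M := by
    intro n
    set w : Fin (N + 1) → ℝ := πq - (A ^ n).mulVec πq with hw
    have e1 : ∑ k ∈ Finset.range n, a k = ∑ i, B.mulVec w i := by
      rw [ha]
      rw [Finset.sum_comm]
      have : ∀ i, ∑ k ∈ Finset.range n, (A ^ k).mulVec πq i = B.mulVec w i := by
        intro i
        have : (∑ k ∈ Finset.range n, A ^ k).mulVec πq = B.mulVec w := by
          rw [hgeom, ← Matrix.mulVec_mulVec, Matrix.sub_mulVec, Matrix.one_mulVec, hw]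
        rw [← this]
        simp only [Matrix.mulVec, dotProduct, Matrix.sum_apply, Finset.sum_mul]
        rw [Finset.sum_comm]
      simp only [this]
    have hwb : ∀ j, |w j| ≤ 1 := by
      intro j
      have h0 : 0 ≤ (A ^ n).mulVec πq j := hvnn n j
      have h1 : (A ^ n).mulVec πq j ≤ 1 :=
        le_trans (Finset.single_le_sum (fun i _ => hvnn n i) (Finset.mem_univ j)) (haub n)
      have hq1 : πq j ≤ 1 := by
        rw [← hπsum]
        exact Finset.single_le_sum (fun i _ => hπnn i) (Finset.mem_univ j)
      rw [hw, abs_le]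
      constructor <;> simp only [Pi.sub_apply] <;> [linarith [hπnn j]; linarith]
    rw [e1]
    have hrow : ∀ i, B.mulVec w i ≤ ∑ j, |B i j| := by
      intro i
      calc B.mulVec w i = ∑ j, B i j * w j := rfl
        _ ≤ ∑ j, |B i j * w j| := Finset.sum_le_sum fun j _ => le_abs_self _
        _ = ∑ j, |B i j| * |w j| := by simp [abs_mul]
        _ ≤ ∑ j, |B i j| * 1 :=
            Finset.sum_le_sum fun j _ => mul_le_mul_of_nonneg_left (hwb j) (abs_nonneg _)
        _ = ∑ j, |B i j| := by simp
    exact Finset.sum_le_sum fun i _ => hrow i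
  have hsummable : Summable a := summable_of_sum_range_le hann hpsum
  have hlim : Filter.Tendsto a Filter.atTop (nhds 0) := hsummable.tendsto_atTop_zero
  -- identify the summand
  have hterm : ∀ k, ∑ i, (Cm * A ^ k).mulVec πq i = a k - a (k + 1) := by
    intro k
    rw [← Matrix.mulVec_mulVec, hCmCp, Matrix.sub_mulVec, Matrix.one_mulVec]
    simp only [Pi.sub_apply]
    rw [Finset.sum_sub_distrib, ← hastep k]
  -- telescoping sum
  have hfinal : HasSum (fun k => a k - a (k + 1)) 1 := by
    rw [hasSum_iff_tendsto_nat_of_nonneg (fun k => sub_nonneg.mpr (hamono k))]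
    have hts : ∀ n, ∑ k ∈ Finset.range n, (a k - a (k + 1)) = 1 - a n := by
      intro n
      rw [Finset.sum_range_sub' a n, ha0]
    simp only [hts]
    simpa using tendsto_const_nhds.sub hlim
  calc ∑' k : ℕ, ∑ i, (Cm * A ^ k).mulVec πq i
      = ∑' k : ℕ, (a k - a (k + 1)) := by simp only [hterm]
    _ = 1 := hfinal.tsum_eq
end
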